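/- Suppose the symmetric random walk on a group G of polynomial growth with growth index d ≥ 5 satisfies sup_g pₙ(g) ≤ C n^{−d/2}. Then E[Σ_{k,ℓ=0}^n 𝒢(S_k, S_ℓ)] ≤ C' n for some constant C' and all n ≥ 1. -/
import Mathlib

open Finset

/-- `transP Γ n g₁ g₂` is the `n`-step transition probability of the symmetric random
walk on `G` whose steps are uniform on `Γ`. -/
noncomputable def transP {G : Type*} [Group G] [DecidableEq G] (Γ : Finset G) :
    ℕ → G → G → ℝ
  | 0, g₁, g₂ => if g₁ = g₂ then 1 else 0
  | n + 1, g₁, g₂ => (Γ.card : ℝ)⁻¹ * ∑ γ ∈ Γ, transP Γ n (g₁ * γ) g₂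

/-- The Green function of the walk. -/
noncomputable def green {G : Type*} [Group G] [DecidableEq G] (Γ : Finset G)
    (g₁ g₂ : G) : ℝ :=
  ∑' n : ℕ, transP Γ n g₁ g₂

/-- The position after `k` steps of the walk started at `g` driven by the word `w`. -/
def walkAt {G : Type*} [Group G] (g : G) {n : ℕ} (w : Fin n → G) (k : ℕ) : G :=
  g * ((List.ofFn w).take k).prod

section Aux
set_option linter.unusedSectionVars false
variable {G : Type*} [Group G] [DecidableEq G] (Γ : Finset G)

lemma transP_succ (n : ℕ) (g₁ g₂ : G) :
    transP Γ (n + 1) g₁ g₂ = (Γ.card : ℝ)⁻¹ * ∑ γ ∈ Γ, transP Γ n (g₁ * γ) g₂ := by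
  rw [transP]

lemma transP_nonneg (m : ℕ) (g₁ g₂ : G) : 0 ≤ transP Γ m g₁ g₂ := by
  induction m generalizing g₁ g₂ with
  | zero => rw [transP]; split <;> norm_num
  | succ m ih =>
    rw [transP_succ]
    exact mul_nonneg (by positivity) (Finset.sum_nonneg fun γ _ => ih _ _)

lemma transP_left_inv (m : ℕ) (h g₁ g₂ : G) :
    transP Γ m (h * g₁) (h * g₂) = transP Γ m g₁ g₂ := by
  induction m generalizing g₁ with
  | zero => simp [transP, mul_right_inj]
  | succ m ih =>
    rw [transP_succ, transP_succ]
    congr 1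
    refine Finset.sum_congr rfl fun γ _ => ?_
    rw [mul_assoc]
    exact ih (g₁ * γ)

lemma transP_self (m : ℕ) (g : G) : transP Γ m g g = transP Γ m 1 1 := by
  simpa using transP_left_inv Γ m g 1 1

lemma transP_succ_right (hsym : ∀ γ ∈ Γ, γ⁻¹ ∈ Γ) (m : ℕ) (a b : G) :
    transP Γ (m + 1) a b = (Γ.card : ℝ)⁻¹ * ∑ γ ∈ Γ, transP Γ m a (b * γ) := by
  have H : ∀ (m : ℕ) (a b : G), transP Γ (m + 1) a b
      = (Γ.card : ℝ)⁻¹ * ∑ γ ∈ Γ, transP Γ m a (b * γ⁻¹) := by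
    intro m
    induction m with
    | zero =>
      intro a b
      rw [transP_succ]
      congr 1
      refine Finset.sum_congr rfl fun γ _ => ?_
      show transP Γ 0 (a * γ) b = transP Γ 0 a (b * γ⁻¹)
      simp only [transP, eq_mul_inv_iff_mul_eq]
    | succ m ih =>
      intro a b
      rw [transP_succ,
        Finset.sum_congr rfl fun δ (_ : δ ∈ Γ) => ih (a * δ) b,
        Finset.sum_congr rfl fun γ (_ : γ ∈ Γ) => transP_succ Γ m a (b * γ⁻¹)]
      simp only [Finset.mul_sum]
      rw [Finset.sum_comm]
  rw [H]
  congr 1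
  refine Finset.sum_equiv (Equiv.inv G) (fun γ => ?_) (fun γ _ => rfl)
  constructor
  · exact fun hγ => hsym γ hγ
  · intro hγ
    simpa using hsym _ hγ

lemma sum_piFinset_snoc {M : Type*} [AddCommMonoid M] (n : ℕ)
    (f : (Fin (n + 1) → G) → M) :
    ∑ w ∈ Fintype.piFinset (fun _ : Fin (n + 1) => Γ), f w
      = ∑ γ ∈ Γ, ∑ v ∈ Fintype.piFinset (fun _ : Fin n => Γ), f (Fin.snoc v γ) := by
  rw [← Finset.sum_product']
  refine Finset.sum_nbij' (fun w => (w (Fin.last n), Fin.init w))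
    (fun p => Fin.snoc p.2 p.1) ?_ ?_ ?_ ?_ ?_
  · intro w hw
    simp only [Fintype.mem_piFinset] at hw
    simp only [Finset.mem_product, Fintype.mem_piFinset]
    exact ⟨hw _, fun i => hw _⟩
  · intro p hp
    simp only [Finset.mem_product, Fintype.mem_piFinset] at hp
    simp only [Fintype.mem_piFinset]
    intro i
    induction i using Fin.lastCases with
    | last => simpa using hp.1
    | cast i => simpa using hp.2 i
  · intro w _
    simp [Fin.snoc_init_self]
  · intro p _
    simp [Fin.init_snoc]
  · intro w _
    simp [Fin.snoc_init_self]

lemma ofFn_snoc {n : ℕ} (v : Fin n → G) (γ : G) :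
    List.ofFn (Fin.snoc v γ : Fin (n + 1) → G) = List.ofFn v ++ [γ] := by
  rw [List.ofFn_succ']
  simp [List.concat_eq_append]

lemma walkAt_zero {n : ℕ} (g : G) (w : Fin n → G) : walkAt g w 0 = g := by
  simp [walkAt]

lemma walkAt_snoc_of_le {n : ℕ} (g : G) (v : Fin n → G) (γ : G) {k : ℕ} (hk : k ≤ n) :
    walkAt g (Fin.snoc v γ : Fin (n + 1) → G) k = walkAt g v k := by
  unfold walkAt
  rw [ofFn_snoc, List.take_append_of_le_length (by simpa using hk)]

lemma walkAt_snoc_last {n : ℕ} (g : G) (v : Fin n → G) (γ : G) :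
    walkAt g (Fin.snoc v γ : Fin (n + 1) → G) (n + 1) = walkAt g v n * γ := by
  unfold walkAt
  rw [ofFn_snoc, List.take_of_length_le (by simp),
    List.prod_append, List.prod_singleton, mul_assoc,
    show (List.ofFn v).take n = List.ofFn v from List.take_of_length_le (by simp)]

lemma card_piFinset_const (n : ℕ) :
    (Fintype.piFinset (fun _ : Fin n => Γ)).card = Γ.card ^ n := by
  rw [Fintype.card_piFinset]
  simp

lemma key_sum (hne : Γ.Nonempty) (hsym : ∀ γ ∈ Γ, γ⁻¹ ∈ Γ) :
    ∀ (n k ℓ m : ℕ), k ≤ n → ℓ ≤ n →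
      ∑ w ∈ Fintype.piFinset (fun _ : Fin n => Γ),
          transP Γ m (walkAt 1 w k) (walkAt 1 w ℓ)
        = (Γ.card : ℝ) ^ n * transP Γ (m + ((k - ℓ) + (ℓ - k))) 1 1 := by
  have hc : (0:ℝ) < (Γ.card : ℝ) := by exact_mod_cast Finset.card_pos.2 hne
  intro n
  induction n with
  | zero =>
    intro k ℓ m hk hℓ
    interval_cases k
    interval_cases ℓ
    rw [Finset.sum_congr rfl fun w _ => by
      rw [walkAt_zero, transP_self]]
    rw [Finset.sum_const, card_piFinset_const]
    simp
  | succ n ih =>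
    intro k ℓ m hk hℓ
    by_cases hkl : k = ℓ
    · subst hkl
      rw [Finset.sum_congr rfl fun w _ => transP_self Γ m (walkAt 1 w k)]
      rw [Finset.sum_const, card_piFinset_const]
      simp [nsmul_eq_mul]
    rw [sum_piFinset_snoc]
    by_cases hk' : k ≤ n
    · by_cases hℓ' : ℓ ≤ n
      · rw [Finset.sum_congr rfl fun γ _ => Finset.sum_congr rfl fun v _ => by
          rw [walkAt_snoc_of_le 1 v γ hk', walkAt_snoc_of_le 1 v γ hℓ']]
        rw [Finset.sum_const, ih k ℓ m hk' hℓ', nsmul_eq_mul]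
        ring
      · have hℓn : ℓ = n + 1 := by omega
        subst hℓn
        rw [Finset.sum_congr rfl fun γ _ => Finset.sum_congr rfl fun v _ => by
          rw [walkAt_snoc_of_le 1 v γ hk', walkAt_snoc_last]]
        rw [Finset.sum_comm]
        rw [Finset.sum_congr rfl fun v _ => show
            ∑ γ ∈ Γ, transP Γ m (walkAt 1 v k) (walkAt 1 v n * γ)
              = (Γ.card : ℝ) * transP Γ (m + 1) (walkAt 1 v k) (walkAt 1 v n) by
          rw [transP_succ_right Γ hsym m]
          field_simp]
        rw [← Finset.mul_sum, ih k n (m + 1) hk' le_rfl]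
        have : m + 1 + (k - n + (n - k)) = m + (k - (n + 1) + (n + 1 - k)) := by omega
        rw [this]
        ring
    · have hkn : k = n + 1 := by omega
      have hℓ' : ℓ ≤ n := by omega
      subst hkn
      rw [Finset.sum_congr rfl fun γ _ => Finset.sum_congr rfl fun v _ => by
        rw [walkAt_snoc_of_le 1 v γ hℓ', walkAt_snoc_last]]
      rw [Finset.sum_comm]
      rw [Finset.sum_congr rfl fun v _ => show
          ∑ γ ∈ Γ, transP Γ m (walkAt 1 v n * γ) (walkAt 1 v ℓ)
            = (Γ.card : ℝ) * transP Γ (m + 1) (walkAt 1 v n) (walkAt 1 v ℓ) by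
        rw [transP_succ Γ m]
        field_simp]
      rw [← Finset.mul_sum, ih n ℓ (m + 1) le_rfl hℓ']
      have : m + 1 + (n - ℓ + (ℓ - n)) = m + (n + 1 - ℓ + (ℓ - (n + 1))) := by omega
      rw [this]
      ring

end Aux

set_option maxHeartbeats 2000000 in
theorem expected_green_double_sum_linear_of_heat_kernel {G : Type*} [Group G]
    [DecidableEq G] (Γ : Finset G)
    (hne : Γ.Nonempty) (hsym : ∀ γ ∈ Γ, γ⁻¹ ∈ Γ)
    (hgen : Subgroup.closure (Γ : Set G) = ⊤)
    (d : ℕ) (hd : 5 ≤ d) (C : ℝ) (hC : 0 < C)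
    (hheat : ∀ n : ℕ, 1 ≤ n → ∀ g : G, transP Γ n 1 g ≤ C * (n : ℝ) ^ (-(d : ℝ) / 2)) :
    ∃ C' : ℝ, ∀ n : ℕ, 1 ≤ n →
      ((Γ.card : ℝ) ^ n)⁻¹ *
          ∑ w ∈ Fintype.piFinset (fun _ : Fin n => Γ),
            ∑ k ∈ Finset.range (n + 1), ∑ ℓ ∈ Finset.range (n + 1),
              green Γ (walkAt 1 w k) (walkAt 1 w ℓ)
        ≤ C' * n := by
  have hc : (0:ℝ) < (Γ.card : ℝ) := by exact_mod_cast Finset.card_pos.2 hne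
  -- basic heat-kernel consequences
  have hheat54 : ∀ (m : ℕ) (g : G),
      transP Γ (m + 1) 1 g ≤ C * ((m : ℝ) + 1) ^ (-(5:ℝ)/4) := by
    intro m g
    have h1 : (1:ℝ) ≤ ((m + 1 : ℕ) : ℝ) := by exact_mod_cast Nat.succ_le_succ (Nat.zero_le m)
    have := hheat (m + 1) (Nat.succ_le_succ (Nat.zero_le m)) g
    refine this.trans ?_
    have hexp : ((m + 1 : ℕ) : ℝ) ^ (-(d:ℝ)/2) ≤ ((m + 1 : ℕ) : ℝ) ^ (-(5:ℝ)/4) := by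
      apply Real.rpow_le_rpow_of_exponent_le h1
      have : (5:ℝ) ≤ (d:ℝ) := by exact_mod_cast hd
      linarith
    have := mul_le_mul_of_nonneg_left hexp hC.le
    simpa [Nat.cast_add, Nat.cast_one] using this
  -- summability of the diagonal and of transP in time
  have hZsummable : Summable (fun j : ℕ => ((j:ℝ) + 1) ^ (-(5:ℝ)/4)) := by
    have h0 : Summable (fun j : ℕ => ((j:ℝ)) ^ (-(5:ℝ)/4)) :=
      Real.summable_nat_rpow.2 (by norm_num)
    have := (summable_nat_add_iff 1).2 h0
    simpa [Nat.cast_add, Nat.cast_one] using this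
  have hsummable_transP : ∀ a b : G, Summable (fun m : ℕ => transP Γ m a b) := by
    intro a b
    have hrepr : ∀ m : ℕ, transP Γ m a b = transP Γ m 1 (a⁻¹ * b) := by
      intro m
      have := transP_left_inv Γ m a⁻¹ a b
      simpa using this.symm
    have h1 : Summable (fun m : ℕ => transP Γ (m + 1) a b) := by
      refine Summable.of_nonneg_of_le (fun m => transP_nonneg Γ _ _ _) (fun m => ?_)
        (hZsummable.mul_left C)
      rw [hrepr (m + 1)]
      exact hheat54 m _
    exact (summable_nat_add_iff 1).1 h1
  -- the shifted Green diagonal sums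
  set GD : ℕ → ℝ := fun D => ∑' m : ℕ, transP Γ (m + D) 1 1 with hGDdef
  have hsummableGD : ∀ D : ℕ, Summable (fun m : ℕ => transP Γ (m + D) 1 1) :=
    fun D => (summable_nat_add_iff D).2 (hsummable_transP 1 1)
  set Z : ℝ := ∑' j : ℕ, ((j:ℝ) + 1) ^ (-(5:ℝ)/4) with hZdef
  have hZ0 : 0 ≤ Z := tsum_nonneg fun j => by positivity
  -- key splitting bound for the heat kernel at time m + D
  have hsplit : ∀ m D : ℕ, 1 ≤ D → transP Γ (m + D) 1 1
      ≤ (C * ((D:ℝ)) ^ (-(5:ℝ)/4)) * ((m:ℝ) + 1) ^ (-(5:ℝ)/4) := by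
    intro m D hD
    obtain ⟨D', rfl⟩ : ∃ D', D = D' + 1 := ⟨D - 1, by omega⟩
    have h1 : (1:ℝ) ≤ ((m + (D' + 1) : ℕ) : ℝ) := by exact_mod_cast by omega
    have hx0 : (0:ℝ) ≤ ((m + (D' + 1) : ℕ) : ℝ) := by positivity
    have hstep1 : transP Γ (m + (D' + 1)) 1 1
        ≤ C * ((m + (D' + 1) : ℕ) : ℝ) ^ (-(5:ℝ)/2) := by
      have := hheat (m + (D' + 1)) (by omega) 1
      refine this.trans (mul_le_mul_of_nonneg_left ?_ hC.le)
      apply Real.rpow_le_rpow_of_exponent_le h1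
      have : (5:ℝ) ≤ (d:ℝ) := by exact_mod_cast hd
      linarith
    have hstep2 : ((m + (D' + 1) : ℕ) : ℝ) ^ (-(5:ℝ)/2)
        ≤ ((m:ℝ) + 1) ^ (-(5:ℝ)/4) * ((D' + 1 : ℕ) : ℝ) ^ (-(5:ℝ)/4) := by
      have hsq : ((m + (D' + 1) : ℕ) : ℝ) ^ (-(5:ℝ)/2)
          = (((m + (D' + 1) : ℕ) : ℝ) ^ (2:ℝ)) ^ (-(5:ℝ)/4) := by
        rw [← Real.rpow_mul hx0]
        norm_num
      rw [hsq]
      have hprodpos : (0:ℝ) < ((m:ℝ) + 1) * ((D' + 1 : ℕ) : ℝ) := by positivity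
      have hle : ((m:ℝ) + 1) * ((D' + 1 : ℕ) : ℝ) ≤ ((m + (D' + 1) : ℕ) : ℝ) ^ (2:ℝ) := by
        rw [Real.rpow_two]
        push_cast
        nlinarith [Nat.cast_nonneg (α := ℝ) m, Nat.cast_nonneg (α := ℝ) D']
      calc (((m + (D' + 1) : ℕ) : ℝ) ^ (2:ℝ)) ^ (-(5:ℝ)/4)
          ≤ (((m:ℝ) + 1) * ((D' + 1 : ℕ) : ℝ)) ^ (-(5:ℝ)/4) :=
            Real.rpow_le_rpow_of_nonpos hprodpos hle (by norm_num)
        _ = ((m:ℝ) + 1) ^ (-(5:ℝ)/4) * ((D' + 1 : ℕ) : ℝ) ^ (-(5:ℝ)/4) :=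
            Real.mul_rpow (by positivity) (by positivity)
    calc transP Γ (m + (D' + 1)) 1 1
        ≤ C * ((m + (D' + 1) : ℕ) : ℝ) ^ (-(5:ℝ)/2) := hstep1
      _ ≤ C * (((m:ℝ) + 1) ^ (-(5:ℝ)/4) * ((D' + 1 : ℕ) : ℝ) ^ (-(5:ℝ)/4)) :=
          mul_le_mul_of_nonneg_left hstep2 hC.le
      _ = (C * ((D' + 1 : ℕ) : ℝ) ^ (-(5:ℝ)/4)) * ((m:ℝ) + 1) ^ (-(5:ℝ)/4) := by ring
  -- bounds on GD
  have hGDpos : ∀ D : ℕ, 1 ≤ D → GD D ≤ C * Z * ((D:ℝ)) ^ (-(5:ℝ)/4) := by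
    intro D hD
    have hmaj : Summable (fun m : ℕ => (C * ((D:ℝ)) ^ (-(5:ℝ)/4)) * ((m:ℝ) + 1) ^ (-(5:ℝ)/4)) :=
      hZsummable.mul_left _
    have := Summable.tsum_le_tsum (fun m => hsplit m D hD) (hsummableGD D) hmaj
    rw [hGDdef]
    refine this.trans_eq ?_
    rw [tsum_mul_left, hZdef]
    ring
  have hGD0 : GD 0 ≤ 1 + C * Z := by
    have heq : GD 0 = transP Γ 0 1 1 + ∑' m : ℕ, transP Γ (m + 1) 1 1 := by
      rw [hGDdef]
      simpa using Summable.tsum_eq_zero_add (by simpa using hsummableGD 0)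
    rw [heq]
    have h0 : transP Γ 0 1 1 = 1 := by rw [transP]; simp
    have htail : ∑' m : ℕ, transP Γ (m + 1) 1 1 ≤ C * Z := by
      have := Summable.tsum_le_tsum (fun m => hheat54 m 1) (hsummableGD 1) (hZsummable.mul_left C)
      simpa [tsum_mul_left, hZdef] using this
    linarith
  have hGDnonneg : ∀ D, 0 ≤ GD D := fun D => tsum_nonneg fun m => transP_nonneg Γ _ _ _
  -- the main per-pair identity
  have hgreen : ∀ (n k ℓ : ℕ), k ≤ n → ℓ ≤ n →
      ((Γ.card : ℝ) ^ n)⁻¹ * ∑ w ∈ Fintype.piFinset (fun _ : Fin n => Γ),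
          green Γ (walkAt 1 w k) (walkAt 1 w ℓ)
        = GD ((k - ℓ) + (ℓ - k)) := by
    intro n k ℓ hk hℓ
    have hsum : ∑ w ∈ Fintype.piFinset (fun _ : Fin n => Γ),
        green Γ (walkAt 1 w k) (walkAt 1 w ℓ)
        = (Γ.card : ℝ) ^ n * GD ((k - ℓ) + (ℓ - k)) := by
      calc ∑ w ∈ Fintype.piFinset (fun _ : Fin n => Γ),
            green Γ (walkAt 1 w k) (walkAt 1 w ℓ)
          = ∑' m : ℕ, ∑ w ∈ Fintype.piFinset (fun _ : Fin n => Γ),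
              transP Γ m (walkAt 1 w k) (walkAt 1 w ℓ) := by
            rw [Summable.tsum_finsetSum fun w _ => hsummable_transP _ _]
            rfl
        _ = ∑' m : ℕ, (Γ.card : ℝ) ^ n * transP Γ (m + ((k - ℓ) + (ℓ - k))) 1 1 := by
            congr 1
            funext m
            exact key_sum Γ hne hsym n k ℓ m hk hℓ
        _ = (Γ.card : ℝ) ^ n * GD ((k - ℓ) + (ℓ - k)) := by
            rw [tsum_mul_left]
    rw [hsum]
    field_simp
  -- the tail estimate used twice
  have hTail : ∀ N : ℕ, ∑ j ∈ Finset.range N, GD (j + 1) ≤ C * Z * Z := by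
    intro N
    have hbound : ∀ j : ℕ, GD (j + 1) ≤ (C * Z) * ((j:ℝ) + 1) ^ (-(5:ℝ)/4) := by
      intro j
      have := hGDpos (j + 1) (by omega)
      calc GD (j + 1) ≤ C * Z * (((j + 1 : ℕ)):ℝ) ^ (-(5:ℝ)/4) := this
        _ = (C * Z) * ((j:ℝ) + 1) ^ (-(5:ℝ)/4) := by push_cast; ring
    calc ∑ j ∈ Finset.range N, GD (j + 1)
        ≤ ∑ j ∈ Finset.range N, (C * Z) * ((j:ℝ) + 1) ^ (-(5:ℝ)/4) :=
          Finset.sum_le_sum fun j _ => hbound j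
      _ = (C * Z) * ∑ j ∈ Finset.range N, ((j:ℝ) + 1) ^ (-(5:ℝ)/4) := by
          rw [Finset.mul_sum]
      _ ≤ (C * Z) * Z := by
          refine mul_le_mul_of_nonneg_left ?_ (by positivity)
          exact Summable.sum_le_tsum _ (fun j _ => by positivity) hZsummable
  set M : ℝ := (1 + C * Z) + C * Z * Z with hMdef
  have hM0 : 0 ≤ M := by positivity
  -- per-k bound
  have hrow : ∀ n k : ℕ, 1 ≤ n → k ≤ n →
      ∑ ℓ ∈ Finset.range (n + 1), GD ((k - ℓ) + (ℓ - k)) ≤ 2 * M := by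
    intro n k hn hk
    have hsplitsum : ∑ ℓ ∈ Finset.range (n + 1), GD ((k - ℓ) + (ℓ - k))
        = (∑ ℓ ∈ Finset.range k, GD ((k - ℓ) + (ℓ - k)))
          + ∑ ℓ ∈ Finset.Ico k (n + 1), GD ((k - ℓ) + (ℓ - k)) := by
      rw [Finset.range_eq_Ico, ← Finset.sum_Ico_consecutive _ (Nat.zero_le k) (by omega),
        ← Finset.range_eq_Ico]
    rw [hsplitsum]
    have hpart1 : ∑ ℓ ∈ Finset.range k, GD ((k - ℓ) + (ℓ - k)) ≤ M := by
      have h1 : ∑ ℓ ∈ Finset.range k, GD ((k - ℓ) + (ℓ - k))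
          = ∑ j ∈ Finset.range k, GD (j + 1) := by
        rw [← Finset.sum_range_reflect (fun j => GD (j + 1)) k]
        refine Finset.sum_congr rfl fun ℓ hℓ => ?_
        have : ℓ < k := Finset.mem_range.1 hℓ
        congr 1
        omega
      rw [h1, hMdef]
      have := hTail k
      have hCZ : 0 ≤ C * Z := by positivity
      linarith
    have hpart2 : ∑ ℓ ∈ Finset.Ico k (n + 1), GD ((k - ℓ) + (ℓ - k)) ≤ M := by
      rw [Finset.sum_Ico_eq_sum_range]
      have h2 : ∑ j ∈ Finset.range (n + 1 - k), GD ((k - (k + j)) + ((k + j) - k))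
          = ∑ j ∈ Finset.range (n + 1 - k), GD j := by
        refine Finset.sum_congr rfl fun j _ => ?_
        congr 1
        omega
      rw [h2]
      obtain ⟨N', hN'⟩ : ∃ N', n + 1 - k = N' + 1 := ⟨n - k, by omega⟩
      rw [hN', Finset.sum_range_succ']
      have := hTail N'
      rw [hMdef]
      linarith
    linarith
  -- final assembly
  refine ⟨4 * M, fun n hn => ?_⟩
  have hswap : ((Γ.card : ℝ) ^ n)⁻¹ *
      ∑ w ∈ Fintype.piFinset (fun _ : Fin n => Γ),
        ∑ k ∈ Finset.range (n + 1), ∑ ℓ ∈ Finset.range (n + 1),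
          green Γ (walkAt 1 w k) (walkAt 1 w ℓ)
      = ∑ k ∈ Finset.range (n + 1), ∑ ℓ ∈ Finset.range (n + 1),
          ((Γ.card : ℝ) ^ n)⁻¹ * ∑ w ∈ Fintype.piFinset (fun _ : Fin n => Γ),
            green Γ (walkAt 1 w k) (walkAt 1 w ℓ) := by
    rw [Finset.sum_comm]
    rw [Finset.sum_congr rfl fun k (_ : k ∈ Finset.range (n + 1)) =>
      (Finset.sum_comm :
        ∑ w ∈ Fintype.piFinset (fun _ : Fin n => Γ), ∑ ℓ ∈ Finset.range (n + 1),
            green Γ (walkAt 1 w k) (walkAt 1 w ℓ)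
          = ∑ ℓ ∈ Finset.range (n + 1), ∑ w ∈ Fintype.piFinset (fun _ : Fin n => Γ),
            green Γ (walkAt 1 w k) (walkAt 1 w ℓ))]
    rw [Finset.mul_sum]
    refine Finset.sum_congr rfl fun k _ => ?_
    rw [Finset.mul_sum]
  rw [hswap]
  have hmain : ∑ k ∈ Finset.range (n + 1), ∑ ℓ ∈ Finset.range (n + 1),
      ((Γ.card : ℝ) ^ n)⁻¹ * ∑ w ∈ Fintype.piFinset (fun _ : Fin n => Γ),
        green Γ (walkAt 1 w k) (walkAt 1 w ℓ)
      ≤ ∑ k ∈ Finset.range (n + 1), (2 * M) := by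
    refine Finset.sum_le_sum fun k hk => ?_
    have hk' : k ≤ n := Nat.lt_succ_iff.1 (Finset.mem_range.1 hk)
    calc ∑ ℓ ∈ Finset.range (n + 1),
          ((Γ.card : ℝ) ^ n)⁻¹ * ∑ w ∈ Fintype.piFinset (fun _ : Fin n => Γ),
            green Γ (walkAt 1 w k) (walkAt 1 w ℓ)
        = ∑ ℓ ∈ Finset.range (n + 1), GD ((k - ℓ) + (ℓ - k)) :=
          Finset.sum_congr rfl fun ℓ hℓ =>
            hgreen n k ℓ hk' (Nat.lt_succ_iff.1 (Finset.mem_range.1 hℓ))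
      _ ≤ 2 * M := hrow n k hn hk'
  refine hmain.trans ?_
  rw [Finset.sum_const, Finset.card_range, nsmul_eq_mul]
  have hn' : (1:ℝ) ≤ (n:ℝ) := by exact_mod_cast hn
  push_cast
  nlinarith [hM0, hn']
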